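/- arXiv:1804.04702 — 3 statements merged into one kernel-verified Lean document; each statement's English description precedes it below -/
import Mathlib

section
/- For partitions λ of n with m parts and μ of n with ℓ parts, the set of m×ℓ matrices of non-negative integers whose i-th row sums to λ_i and whose j-th column sums to μ_j is in bijection with the double cosets S_λ\S_n/S_μ of the corresponding Young subgroups in the symmetric group S_n. -/
/-
The double coset of `σ` in `S_λ \ S_n / S_μ` is recorded by the matrix whose `(i, j)` entry
counts the points of the `j`-th block of `μ` that `σ` sends into the `i`-th block of `λ`; its
row and column sums are `λ` and `μ`. Two maps `α → X` differ by a permutation of `α` exactly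
when their fibres have the same sizes. Applied to `y ↦ (block of σ y, block of y)` this shows
that two permutations give the same matrix iff they lie in the same double coset, and applied
to the two coordinates of a map with fibre sizes `M` it realises every admissible `M`.
-/

/-- The Young subgroup attached to a block function `f : Fin n → Fin m`
(encoding an ordered set partition of `{1,...,n}`): permutations preserving
each block, i.e. `f ∘ σ = f`. -/
def youngSubgroup {n m : ℕ} (f : Fin n → Fin m) : Subgroup (Equiv.Perm (Fin n)) where
  carrier := {σ | ∀ x, f (σ x) = f x}
  one_mem' := fun _ => rfl
  mul_mem' := by
    intro σ τ hσ hτ x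
    rw [Equiv.Perm.mul_apply, hσ, hτ]
  inv_mem' := by
    intro σ hσ x
    simpa using (hσ (σ⁻¹ x)).symm

open Finset

section FiberCard

variable {α β X Y : Type*} [Fintype α] [DecidableEq X]

def fiberCard (F : α → X) (x : X) : ℕ := #{a | F a = x}

lemma fiberCard_comp_equiv [Fintype β] (F : β → X) (e : α ≃ β) :
    fiberCard (F ∘ e) = fiberCard F :=
  funext fun _ => card_equiv e (by simp)

lemma sum_fiberCard [Fintype X] (F : α → X) : ∑ x, fiberCard F x = Fintype.card α :=
  (card_eq_sum_card_fiberwise fun _ _ => mem_univ _).symm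

variable [DecidableEq Y]

lemma sum_fiberCard_prod_right [Fintype Y] (P : α → X × Y) (x : X) :
    ∑ y, fiberCard P (x, y) = fiberCard (Prod.fst ∘ P) x := by
  rw [fiberCard, card_eq_sum_card_fiberwise (f := Prod.snd ∘ P) fun _ _ => mem_univ _]
  simp [fiberCard, filter_filter, Prod.ext_iff]

lemma sum_fiberCard_prod_left [Fintype X] (P : α → X × Y) (y : Y) :
    ∑ x, fiberCard P (x, y) = fiberCard (Prod.snd ∘ P) y := by
  rw [fiberCard, card_eq_sum_card_fiberwise (f := Prod.fst ∘ P) fun _ _ => mem_univ _]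
  simp [fiberCard, filter_filter, Prod.ext_iff, and_comm]

lemma exists_perm_comp_eq_iff (F G : α → X) :
    (∃ σ : Equiv.Perm α, F ∘ σ = G) ↔ fiberCard F = fiberCard G := by
  refine ⟨by rintro ⟨σ, rfl⟩; exact (fiberCard_comp_equiv F σ).symm, fun h => ?_⟩
  have e : ∀ x, {a // G a = x} ≃ {a // F a = x} := fun x =>
    Fintype.equivOfCardEq <| by
      rw [Fintype.card_subtype, Fintype.card_subtype]
      exact (congrFun h x).symm
  exact ⟨Equiv.ofFiberEquiv e, funext (Equiv.ofFiberEquiv_map e)⟩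

lemma exists_fiberCard_eq [Fintype X] (c : X → ℕ) (hc : ∑ x, c x = Fintype.card α) :
    ∃ F : α → X, fiberCard F = c := by
  obtain ⟨e⟩ : Nonempty (α ≃ Σ x, Fin (c x)) := Fintype.card_eq.mp (by simp [hc])
  refine ⟨Sigma.fst ∘ e, ?_⟩
  rw [fiberCard_comp_equiv]
  funext x
  rw [fiberCard, ← Fintype.card_subtype, Fintype.card_congr (Equiv.sigmaSubtype x),
    Fintype.card_fin]

end FiberCard

abbrev Tabloid {m ℓ : ℕ} (lam : Fin m → ℕ) (mu : Fin ℓ → ℕ) : Type :=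
  {M : Fin m → Fin ℓ → ℕ // (∀ i, ∑ j, M i j = lam i) ∧ (∀ j, ∑ i, M i j = mu j)}

section Tabloid

variable {n m ℓ : ℕ} (f : Fin n → Fin m) (g : Fin n → Fin ℓ)

def blockPair (σ : Equiv.Perm (Fin n)) (y : Fin n) : Fin m × Fin ℓ := (f (σ y), g y)

def tabloidOf (σ : Equiv.Perm (Fin n)) : Fin m → Fin ℓ → ℕ :=
  Function.curry (fiberCard (blockPair f g σ))

lemma tabloidOf_sums (σ : Equiv.Perm (Fin n)) :
    (∀ i, ∑ j, tabloidOf f g σ i j = fiberCard f i) ∧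
      (∀ j, ∑ i, tabloidOf f g σ i j = fiberCard g j) :=
  ⟨fun i => by
    rw [tabloidOf, ← fiberCard_comp_equiv f σ]
    exact sum_fiberCard_prod_right _ i,
   fun j => sum_fiberCard_prod_left (blockPair f g σ) j⟩

lemma tabloidOf_eq_iff {σ τ : Equiv.Perm (Fin n)} :
    tabloidOf f g σ = tabloidOf f g τ ↔
      DoubleCoset.setoid (youngSubgroup f : Set (Equiv.Perm (Fin n))) (youngSubgroup g) σ τ := by
  rw [DoubleCoset.rel_iff, tabloidOf, tabloidOf, Function.curry_injective.eq_iff,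
    ← exists_perm_comp_eq_iff]
  constructor
  · rintro ⟨b, hb⟩
    have hf : ∀ y, f (σ (b y)) = f (τ y) := fun y => congrArg Prod.fst (congrFun hb y)
    have hg : ∀ y, g (b y) = g y := fun y => congrArg Prod.snd (congrFun hb y)
    refine ⟨τ * b⁻¹ * σ⁻¹, fun x => ?_, b, hg, by group⟩
    simpa using (hf (b⁻¹ (σ⁻¹ x))).symm
  · rintro ⟨a, ha, b, hb, rfl⟩
    exact ⟨b, funext fun y => Prod.ext (ha (σ (b y))).symm (hb y)⟩

lemma exists_tabloidOf_eq (M : Tabloid (fiberCard f) (fiberCard g)) :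
    ∃ σ, tabloidOf f g σ = M.1 := by
  obtain ⟨M, hrow, hcol⟩ := M
  obtain ⟨P, hP⟩ : ∃ P : Fin n → Fin m × Fin ℓ, fiberCard P = Function.uncurry M := by
    refine exists_fiberCard_eq _ ?_
    simp only [Fintype.sum_prod_type, Function.uncurry_apply_pair, hrow, sum_fiberCard]
  obtain ⟨σ₁, hσ₁⟩ := (exists_perm_comp_eq_iff f (Prod.fst ∘ P)).mpr <| funext fun i => by
    rw [← sum_fiberCard_prod_right, hP]
    exact (hrow i).symm
  obtain ⟨σ₂, hσ₂⟩ := (exists_perm_comp_eq_iff g (Prod.snd ∘ P)).mpr <| funext fun j => by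
    rw [← sum_fiberCard_prod_left, hP]
    exact (hcol j).symm
  have hP' : blockPair f g (σ₁ * σ₂⁻¹) ∘ σ₂ = P := funext fun y =>
    Prod.ext (by simpa [blockPair] using congrFun hσ₁ y) (congrFun hσ₂ y)
  refine ⟨σ₁ * σ₂⁻¹, ?_⟩
  rw [tabloidOf, ← fiberCard_comp_equiv _ σ₂, hP', hP, Function.curry_uncurry]

def toTabloid (σ : Equiv.Perm (Fin n)) : Tabloid (fiberCard f) (fiberCard g) :=
  ⟨tabloidOf f g σ, tabloidOf_sums f g σ⟩

noncomputable def doubleCosetEquivTabloid :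
    DoubleCoset.Quotient (youngSubgroup f : Set (Equiv.Perm (Fin n))) (youngSubgroup g) ≃
      Tabloid (fiberCard f) (fiberCard g) :=
  have rel_iff_ker (σ τ : Equiv.Perm (Fin n)) :
      DoubleCoset.setoid (youngSubgroup f : Set (Equiv.Perm (Fin n))) (youngSubgroup g) σ τ ↔
        Setoid.ker (toTabloid f g) σ τ := by
    rw [← tabloidOf_eq_iff, Setoid.ker_def, Subtype.ext_iff]; rfl
  (Quotient.congrRight rel_iff_ker).trans <|
    Setoid.quotientKerEquivOfSurjective _ fun M =>
      (exists_tabloidOf_eq f g M).imp fun _ => Subtype.ext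

end Tabloid

theorem stmt4_general (n m ℓ : ℕ) (lam : Fin m → ℕ) (mu : Fin ℓ → ℕ)
    (f : Fin n → Fin m) (g : Fin n → Fin ℓ)
    (hf : ∀ i, (Finset.univ.filter fun x => f x = i).card = lam i)
    (hg : ∀ j, (Finset.univ.filter fun x => g x = j).card = mu j) :
    Nonempty
      ({M : Fin m → Fin ℓ → ℕ //
          (∀ i, ∑ j, M i j = lam i) ∧ (∀ j, ∑ i, M i j = mu j)} ≃
        DoubleCoset.Quotient (↑(youngSubgroup f) : Set (Equiv.Perm (Fin n)))
          (↑(youngSubgroup g) : Set (Equiv.Perm (Fin n)))) := by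
  obtain rfl : lam = fiberCard f := funext fun i => (hf i).symm
  obtain rfl : mu = fiberCard g := funext fun j => (hg j).symm
  exact ⟨(doubleCosetEquivTabloid f g).symm⟩

/-- For partitions `λ` of `n` with `m` parts and `μ` of `n` with `ℓ` parts
(presented via block functions `f`, `g` with fiber sizes `λ`, `μ`), the set of
`m × ℓ` matrices of non-negative integers with row sums `λ` and column sums `μ`
is in bijection with the double cosets `S_λ \ S_n / S_μ`. -/
theorem stmt4 (n m ℓ : ℕ) (lam : Fin m → ℕ) (mu : Fin ℓ → ℕ)
    (hlam : ∑ i, lam i = n) (hmu : ∑ j, mu j = n)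
    (f : Fin n → Fin m) (g : Fin n → Fin ℓ)
    (hf : ∀ i, (Finset.univ.filter fun x => f x = i).card = lam i)
    (hg : ∀ j, (Finset.univ.filter fun x => g x = j).card = mu j) :
    Nonempty
      ({M : Fin m → Fin ℓ → ℕ //
          (∀ i, ∑ j, M i j = lam i) ∧ (∀ j, ∑ i, M i j = mu j)} ≃
        DoubleCoset.Quotient (↑(youngSubgroup f) : Set (Equiv.Perm (Fin n)))
          (↑(youngSubgroup g) : Set (Equiv.Perm (Fin n)))) :=
  stmt4_general n m ℓ lam mu f g hf hg
end

section
/- For n ≥ m, the dimension of the space of S_n-invariants in V^{⊗m} equals the Bell number B_m, the number of set partitions of an m-element set. -/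
/-!
An `S_n`-invariant vector in `V^{⊗m}` is a function of `w : Fin m → Fin n` that is constant on
the orbits `w ↦ σ ∘ w`. Two words lie in the same orbit iff they have the same kernel
`i ~ j ↔ w i = w j`, and when `m ≤ n` every partition of `Fin m` is such a kernel. So the
invariants are exactly the pullbacks of functions on `Setoid (Fin m)` along `Setoid.ker`.
-/

/-- The space of `S_n`-invariants in `V^{⊗m}`, where `V = ℂ^n` is the
permutation representation of `S_n`:  `V^{⊗m}` is realized as functions on its
basis of simple tensors indexed by `w : Fin m → Fin n`, with the diagonal
action `w ↦ σ ∘ w`. -/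
noncomputable def tensorInvariants (n m : ℕ) : Submodule ℂ ((Fin m → Fin n) → ℂ) where
  carrier := {v | ∀ σ : Equiv.Perm (Fin n), ∀ w : Fin m → Fin n, v (σ ∘ w) = v w}
  add_mem' := by
    intro u v hu hv σ w
    simp only [Pi.add_apply, hu σ w, hv σ w]
  zero_mem' := fun _ _ => rfl
  smul_mem' := by
    intro c v hv σ w
    simp only [Pi.smul_apply, hv σ w]

open Function

namespace Setoid

theorem ker_comp_of_injective {α β γ : Type*} {g : β → γ} (hg : Injective g) (f : α → β) :
    ker (g ∘ f) = ker f :=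
  Setoid.ext fun _ _ => hg.eq_iff

theorem exists_perm_comp_eq_of_ker_eq {α β : Type*} [Finite β] {f g : α → β}
    (h : ker f = ker g) : ∃ σ : Equiv.Perm β, σ ∘ f = g := by
  classical
  let e : Set.range f ≃ Set.range g := (quotientKerEquivRange f).symm.trans
    ((Quotient.congrRight fun _ _ => by rw [h]).trans (quotientKerEquivRange g))
  refine ⟨e.extendSubtype, funext fun a => ?_⟩
  have hq : (quotientKerEquivRange f).symm ⟨f a, a, rfl⟩ = ⟦a⟧ := (Equiv.symm_apply_eq _).2 rfl
  rw [comp_apply, Equiv.extendSubtype_apply_of_mem e _ (Set.mem_range_self a)]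
  simp only [e, Equiv.trans_apply, hq]
  rfl

theorem ker_surjective_of_card_le {α β : Type*} [Fintype α] [Fintype β]
    (h : Fintype.card α ≤ Fintype.card β) : Surjective (ker : (α → β) → Setoid α) := by
  classical
  intro s
  obtain ⟨q⟩ := Embedding.nonempty_of_card_le ((Fintype.card_quotient_le s).trans h)
  exact ⟨q ∘ Quotient.mk'', by rw [ker_comp_of_injective q.injective, ker_mk_eq]⟩

instance {α : Type*} [Finite α] : Finite (Setoid α) :=
  Finite.of_injective (fun s : Setoid α => ⇑s) fun _ _ h =>
    Setoid.ext fun a b => iff_of_eq (congrFun₂ h a b)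

end Setoid

theorem LinearMap.mem_range_funLeft_iff {R M X Y : Type*} [Semiring R] [AddCommMonoid M]
    [Module R M] {k : X → Y} (hk : Surjective k) {v : X → M} :
    v ∈ range (funLeft R M k) ↔ ∀ x y, k x = k y → v x = v y := by
  constructor
  · rintro ⟨f, rfl⟩ x y hxy
    simp [funLeft_apply, hxy]
  · intro hv
    exact ⟨v ∘ surjInv hk, funext fun x => hv _ _ (surjInv_eq hk (k x))⟩

theorem tensorInvariants_eq_range_funLeft_ker {n m : ℕ} (h : m ≤ n) :
    tensorInvariants n m =
      LinearMap.range (LinearMap.funLeft ℂ ℂ (Setoid.ker : (Fin m → Fin n) → Setoid (Fin m))) := by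
  ext v
  rw [LinearMap.mem_range_funLeft_iff (Setoid.ker_surjective_of_card_le (by simpa using h))]
  constructor
  · intro hv x y hxy
    obtain ⟨σ, rfl⟩ := Setoid.exists_perm_comp_eq_of_ker_eq hxy
    exact (hv σ x).symm
  · intro hv σ w
    exact hv _ _ (Setoid.ker_comp_of_injective σ.injective w)

/-- For `n ≥ m`, the dimension of the space of `S_n`-invariants in `V^{⊗m}`
equals the Bell number `B_m`, i.e. the number of set partitions of an
`m`-element set (encoded as equivalence relations on `Fin m`). -/
theorem stmt9 (n m : ℕ) (h : n ≥ m) :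
    Module.finrank ℂ (tensorInvariants n m) = Nat.card (Setoid (Fin m)) := by
  have hker : Surjective (Setoid.ker : (Fin m → Fin n) → Setoid (Fin m)) :=
    Setoid.ker_surjective_of_card_le (by simpa using h)
  rw [tensorInvariants_eq_range_funLeft_ker h,
    LinearMap.finrank_range_of_inj (LinearMap.funLeft_injective_of_surjective _ _ _ hker)]
  exact Module.finrank_eq_nat_card_basis (Pi.basisFun ℂ _)
end

section
/- For n ≥ k_1 + ... + k_m, the dimension of the space of S_n-invariants in Sym^{k_1}(V) ⊗ Sym^{k_2}(V) ⊗ ... ⊗ Sym^{k_m}(V) equals the number of multiset partitions of the multiset {1^{k_1}, 2^{k_2}, ..., m^{k_m}}. -/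
/-- The basis of `Sym^{k_1}(V) ⊗ ... ⊗ Sym^{k_m}(V)` for `V = ℂ^n`: an
`m`-tuple of monomials, the `j`-th being a monomial of total degree `k_j` in
`n` variables, recorded by its exponent vector. -/
def SymBasis (n m : ℕ) (k : Fin m → ℕ) : Type :=
  ∀ j : Fin m, {d : Fin n → ℕ // ∑ x, d x = k j}

/-- The space of `S_n`-invariants in `Sym^{k_1}(V) ⊗ ... ⊗ Sym^{k_m}(V)`,
realized as functions on the monomial basis, where `σ ∈ S_n` acts diagonally by
permuting the variables in each exponent vector. -/
noncomputable def symInvariants (n m : ℕ) (k : Fin m → ℕ) :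
    Submodule ℂ (SymBasis n m k → ℂ) where
  carrier := {v | ∀ σ : Equiv.Perm (Fin n), ∀ p q : SymBasis n m k,
    (∀ j, (q j).1 = (p j).1 ∘ σ) → v q = v p}
  add_mem' := by
    intro u v hu hv σ p q h
    simp only [Pi.add_apply, hu σ p q h, hv σ p q h]
  zero_mem' := fun _ _ _ _ => rfl
  smul_mem' := by
    intro c v hv σ p q h
    simp only [Pi.smul_apply, hv σ p q h]

/-- The multiset `{1^{k_1}, 2^{k_2}, ..., m^{k_m}}` on `Fin m`. -/
def theMultiset (m : ℕ) (k : Fin m → ℕ) : Multiset (Fin m) :=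
  ∑ j, Multiset.replicate (k j) j

/-! The monomial basis of `Sym^{k_1}(V) ⊗ ⋯ ⊗ Sym^{k_m}(V)` is permuted by `S_n`, so the
invariants have a basis indexed by the orbits. Read a basis element column by column: variable `x`
gives the multiset containing `j` as often as `x` occurs in the `j`-th monomial. The `n` columns
add up to `{1^{k_1}, …, m^{k_m}}` and `S_n` merely permutes them, so an orbit is the multiset of
its columns, and discarding the empty columns leaves a multiset partition. Conversely a multiset
partition has at most `k_1 + ⋯ + k_m ≤ n` blocks, so it can be padded with empty columns to `n`
of them. -/

open Finset

namespace Multiset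

variable {α ι : Type*}

theorem count_sum_replicate [Fintype ι] [DecidableEq ι] (c : ι → ℕ) (j : ι) :
    count j (∑ i, replicate (c i) i) = c j := by
  simp [count_sum', count_replicate]

theorem sum_replicate_count [Fintype α] [DecidableEq α] (s : Multiset α) :
    ∑ a, replicate (count a s) a = s :=
  ext.2 fun a => count_sum_replicate _ a

theorem card_le_card_sum_of_ne_zero {P : Multiset (Multiset α)} (hP : ∀ p ∈ P, p ≠ 0) :
    card P ≤ card P.sum := by
  have := card_nsmul_le_sum (s := P.map card) (a := 1) (by
    simpa [Nat.one_le_iff_ne_zero] using hP)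
  rw [card_map, smul_eq_mul, mul_one] at this
  exact this.trans_eq (card_join P).symm

theorem sum_filter_ne_zero {M : Type*} [AddCommMonoid M] [DecidableEq M] (s : Multiset M) :
    (s.filter (· ≠ 0)).sum = s.sum := by
  conv_rhs => rw [← filter_add_not (· ≠ 0) s]
  rw [sum_add, sum_eq_zero (s := s.filter (¬ · ≠ 0)), add_zero]
  exact fun x hx => by simpa using (mem_filter.1 hx).2

theorem filter_ne_eq_filter_ne_iff [DecidableEq α] {s t : Multiset α} (a : α)
    (h : card s = card t) : s.filter (· ≠ a) = t.filter (· ≠ a) ↔ s = t := by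
  refine ⟨fun hst => ?_, fun hst => hst ▸ rfl⟩
  have key (u : Multiset α) :
      u.filter (· ≠ a) + replicate (card u - card (u.filter (· ≠ a))) a = u := by
    have hsplit := filter_add_not (· ≠ a) u
    simp only [not_not, filter_eq'] at hsplit
    have hcard := congrArg card hsplit
    rw [card_add, card_replicate] at hcard
    conv_rhs => rw [← hsplit]
    rw [← hcard, Nat.add_sub_cancel_left]
  rw [← key s, ← key t, hst, h]

theorem exists_map_univ_eq {n : ℕ} {Q : Multiset α} (h : card Q = n) :
    ∃ c : Fin n → α, univ.val.map c = Q := by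
  obtain ⟨L, rfl⟩ : ∃ L : List α, ↑L = Q := Quotient.exists_rep Q
  rw [coe_card] at h
  subst h
  exact ⟨fun i => L[(i : ℕ)], by rw [Fin.univ_val_map, List.ofFn_getElem]⟩

end Multiset

theorem Equiv.Perm.exists_comp_eq_iff_map_univ_eq {ι α : Type*} [Fintype ι] (f g : ι → α) :
    (∃ σ : Equiv.Perm ι, g = f ∘ σ) ↔ univ.val.map f = univ.val.map g := by
  classical
  constructor
  · rintro ⟨σ, rfl⟩
    rw [← Multiset.map_map, Multiset.map_univ_val_equiv]
  · intro h
    have card_fiber (φ : ι → α) (a : α) :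
        Fintype.card {x // φ x = a} = (univ.val.map φ).count a := by
      rw [Fintype.card_subtype, Multiset.count_map]
      simp only [eq_comm]
      rfl
    have hfib (a : α) : {x // g x = a} ≃ {x // f x = a} :=
      Fintype.equivOfCardEq (by rw [card_fiber, card_fiber, h])
    exact ⟨Equiv.ofFiberEquiv hfib, funext fun x => (Equiv.ofFiberEquiv_map hfib x).symm⟩

theorem finrank_eq_card_range_of_mem_iff {K X Y : Type*} [Field K] [Finite X] (f : X → Y)
    {S : Submodule K (X → K)} (hS : ∀ v, v ∈ S ↔ ∀ a b, f a = f b → v a = v b) :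
    Module.finrank K S = Nat.card (Set.range f) := by
  classical
  have : Fintype X := Fintype.ofFinite X
  have hS' : S = LinearMap.range (LinearMap.funLeft K K (Quotient.mk (Setoid.ker f))) := by
    ext v
    rw [hS, LinearMap.mem_range]
    constructor
    · exact fun hv => ⟨Quotient.lift v hv, rfl⟩
    · rintro ⟨w, rfl⟩ a b hab
      exact congrArg w (Quotient.sound hab)
  rw [hS', LinearMap.finrank_range_of_inj (LinearMap.funLeft_injective_of_surjective _ _ _
    Quotient.mk_surjective), Module.finrank_pi, ← Nat.card_eq_fintype_card,
    Nat.card_congr (Setoid.quotientKerEquivRange f)]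

namespace SymBasis

variable {n m : ℕ} {k : Fin m → ℕ}

instance : Finite (SymBasis n m k) := by
  have (j : Fin m) : Finite {d : Fin n → ℕ // ∑ x, d x = k j} :=
    ((Finset.Nat.antidiagonalTuple n (k j)).finite_toSet.subset
      fun d hd => Finset.Nat.mem_antidiagonalTuple.2 hd).to_subtype
  exact Pi.finite

def column (p : SymBasis n m k) (x : Fin n) : Multiset (Fin m) :=
  ∑ j, Multiset.replicate ((p j).1 x) j

theorem count_column (p : SymBasis n m k) (j : Fin m) (x : Fin n) :
    (p.column x).count j = (p j).1 x :=
  Multiset.count_sum_replicate _ j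

theorem column_eq_comp_iff {p q : SymBasis n m k} {σ : Equiv.Perm (Fin n)} :
    q.column = p.column ∘ σ ↔ ∀ j, (q j).1 = (p j).1 ∘ σ := by
  constructor
  · intro h j
    funext x
    simpa [count_column] using congrArg (Multiset.count j) (congrFun h x)
  · intro h
    funext x
    ext j
    simp [count_column, h j]

theorem sum_column (p : SymBasis n m k) : ∑ x, p.column x = theMultiset m k := by
  ext j
  rw [Multiset.count_sum', theMultiset, Multiset.count_sum_replicate]
  simp_rw [count_column]
  exact (p j).2

theorem exists_column_eq {c : Fin n → Multiset (Fin m)} (hc : ∑ x, c x = theMultiset m k) :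
    ∃ p : SymBasis n m k, p.column = c :=
  ⟨fun j => ⟨fun x => (c x).count j, by
      rw [← Multiset.count_sum', hc, theMultiset, Multiset.count_sum_replicate]⟩,
    funext fun x => Multiset.sum_replicate_count (c x)⟩

noncomputable def parts (p : SymBasis n m k) : Multiset (Multiset (Fin m)) :=
  (univ.val.map p.column).filter (· ≠ 0)

theorem parts_eq_parts_iff {p q : SymBasis n m k} :
    p.parts = q.parts ↔ ∃ σ : Equiv.Perm (Fin n), ∀ j, (q j).1 = (p j).1 ∘ σ := by
  rw [parts, parts, Multiset.filter_ne_eq_filter_ne_iff _ (by simp),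
    ← Equiv.Perm.exists_comp_eq_iff_map_univ_eq]
  simp only [column_eq_comp_iff]

theorem range_parts (h : ∑ j, k j ≤ n) :
    Set.range (parts (n := n) (k := k)) =
      {P | (∀ p ∈ P, p ≠ 0) ∧ P.sum = theMultiset m k} := by
  ext P
  constructor
  · rintro ⟨p, rfl⟩
    refine ⟨fun a ha => (Multiset.mem_filter.1 ha).2, ?_⟩
    rw [parts, Multiset.sum_filter_ne_zero, ← sum_column p]
    rfl
  · rintro ⟨hne, hsum⟩
    have hcard : Multiset.card P ≤ n := by
      refine (Multiset.card_le_card_sum_of_ne_zero hne).trans ?_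
      simpa [hsum, theMultiset] using h
    obtain ⟨c, hc⟩ := Multiset.exists_map_univ_eq
      (n := n) (Q := P + Multiset.replicate (n - Multiset.card P) 0)
      (by rw [Multiset.card_add, Multiset.card_replicate]; omega)
    obtain ⟨p, rfl⟩ := exists_column_eq (k := k) (c := c) (by
      rw [Finset.sum_eq_multiset_sum, hc]; simp [hsum])
    refine ⟨p, ?_⟩
    rw [parts, hc, Multiset.filter_add, Multiset.filter_eq_self.2 hne,
      Multiset.filter_eq_nil.2 fun a ha => not_not.2 (Multiset.eq_of_mem_replicate ha),
      add_zero]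

end SymBasis

theorem mem_symInvariants_iff {n m : ℕ} {k : Fin m → ℕ} (v : SymBasis n m k → ℂ) :
    v ∈ symInvariants n m k ↔ ∀ p q, p.parts = q.parts → v p = v q := by
  simp only [SymBasis.parts_eq_parts_iff]
  constructor
  · rintro hv p q ⟨σ, hσ⟩
    exact (hv σ p q hσ).symm
  · intro hv σ p q hσ
    exact (hv p q ⟨σ, hσ⟩).symm

/-- For `n ≥ k_1 + ... + k_m`, the dimension of the space of `S_n`-invariants
in `Sym^{k_1}(V) ⊗ ... ⊗ Sym^{k_m}(V)` equals the number of multiset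
partitions of the multiset `{1^{k_1}, ..., m^{k_m}}`. -/
theorem stmt10 (n m : ℕ) (k : Fin m → ℕ) (h : n ≥ ∑ j, k j) :
    Module.finrank ℂ (symInvariants n m k) =
      Nat.card {P : Multiset (Multiset (Fin m)) //
        (∀ p ∈ P, p ≠ 0) ∧ P.sum = theMultiset m k} := by
  rw [finrank_eq_card_range_of_mem_iff SymBasis.parts mem_symInvariants_iff,
    SymBasis.range_parts h]
  rfl
end
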